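/- arXiv:1609.01969 — 5 statements merged into one kernel-verified Lean document; each statement's English description precedes it below -/
import Mathlib

section
/- Let G be a finite group and let K be a subgroup of G. Then K is a sol-component of G if and only if K is a nonsolvable subnormal subgroup of G that is minimal among nonsolvable subnormal subgroups of G, i.e. K is subnormal in G, K is not solvable, and every subnormal subgroup of G that is contained in K and is not solvable equals K. -/
open Pointwise

/-- A subgroup `H` of `G` is *subnormal* if there is a finite chain
`H = c 0 ⊴ c 1 ⊴ ⋯ ⊴ c n = G` with each term normal in the next. -/
def IsSubnormal {G : Type*} [Group G] (H : Subgroup G) : Prop :=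
  ∃ (n : ℕ) (c : ℕ → Subgroup G), c 0 = H ∧ c n = ⊤ ∧
    ∀ i < n, c i ≤ c (i + 1) ∧ ((c i).subgroupOf (c (i + 1))).Normal

/-- A group is *quasisimple* if it is perfect and its quotient by its center is simple. -/
def IsQuasisimpleGroup (Q : Type*) [Group Q] : Prop :=
  commutator Q = ⊤ ∧ IsSimpleGroup (Q ⧸ Subgroup.center Q)

/-- A *component* of `G` is a quasisimple subnormal subgroup. -/
def IsComponent {G : Type*} [Group G] (K : Subgroup G) : Prop :=
  IsSubnormal K ∧ IsQuasisimpleGroup ↥K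

/-- The *layer* `E(G)`: the subgroup generated by all components of `G`. -/
def layer (G : Type*) [Group G] : Subgroup G :=
  sSup {K : Subgroup G | IsComponent K}

/-- `Sol(G)`: the join of all solvable normal subgroups of `G`. -/
def solRadical (G : Type*) [Group G] : Subgroup G :=
  sSup {N : Subgroup G | N.Normal ∧ IsSolvable ↥N}

instance solRadical_normal (G : Type*) [Group G] : (solRadical G).Normal := by
  constructor
  intro n hn g
  have h : solRadical G ≤ (solRadical G).comap (MulAut.conj g).toMonoidHom := by
    apply sSup_le
    intro N hN x hx
    have hmem : g * x * g⁻¹ ∈ N := hN.1.conj_mem x hx g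
    exact Subgroup.mem_comap.mpr
      (le_sSup hN (by simpa [MulAut.conj_apply] using hmem))
  simpa [MulAut.conj_apply] using h hn

/-- A *sol-component* of `G` is a perfect subnormal subgroup of `G` whose image in
`G/Sol(G)` is a component of `G/Sol(G)`. -/
def IsSolComponent {G : Type*} [Group G] (K : Subgroup G) : Prop :=
  IsSubnormal K ∧ commutator ↥K = ⊤ ∧
    IsComponent (K.map (QuotientGroup.mk' (solRadical G)))

/-- `E_sol(G)`: the subgroup generated by all sol-components of `G`. -/
def solLayer (G : Type*) [Group G] : Subgroup G :=
  sSup {K : Subgroup G | IsSolComponent K}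

/-!
Two facts about a finite group `G` carry the proof. First, `Sol(G)` is solvable and contains every
solvable subnormal subgroup: the solvable radical of a term `H` of a subnormal series is
characteristic in `H`, hence normal in the next term, so it can be pushed up the series. Second,
in a perfect group, a subnormal subgroup `T` with `T ⊔ N = ⊤` for a solvable normal `N` is the
whole group: going up the series, the quotient by `T` is both perfect and solvable.

If `K` is a sol-component, its image `K̄` in `G ⧸ Sol(G)` is quasisimple, so the image of a
subnormal `S ≤ K` is either central in `K̄`, and then `S` is solvable, or all of `K̄`, and then
`S = K` by the second fact applied in `K`. Conversely, if `K` is minimal among nonsolvable subnormal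
subgroups, every normal subgroup of `K` is solvable or all of `K`. So `K` is perfect, and a normal
subgroup of `K̄` pulls back either to `K` or to a solvable subgroup, which lies in `Sol(G)` by the
first fact. Thus `K̄` is simple and perfect, in particular quasisimple.
-/

section

variable {G G' : Type*} [Group G] [Group G']

theorem isSubnormal_iff_subgroup_isSubnormal {H : Subgroup G} :
    IsSubnormal H ↔ H.IsSubnormal := by
  constructor
  · rintro ⟨n, c, rfl, hn, hstep⟩
    induction n generalizing c with
    | zero => exact hn ▸ .top
    | succ n ih =>
      exact .step _ _ (hstep 0 n.succ_pos).1
        (ih (fun i => c (i + 1)) hn fun i hi => hstep (i + 1) (by omega)) (hstep 0 n.succ_pos).2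
  · intro h
    obtain ⟨n, c, hmono, hnormal, h0, hn⟩ := Subgroup.IsSubnormal.isSubnormal_iff.mp h
    exact ⟨n, c, h0, hn, fun i _ => ⟨hmono i.le_succ, hnormal i⟩⟩

instance Subgroup.isSolvable_map (f : G →* G') (A : Subgroup G) [Group.IsSolvable A] :
    Group.IsSolvable (A.map f) :=
  Group.isSolvable_of_surjective (f.subgroupMap_surjective A)

instance Subgroup.isSolvable_subgroupOf (A B : Subgroup G) [Group.IsSolvable A] :
    Group.IsSolvable (A.subgroupOf B) :=
  Group.isSolvable_of_isSolvable_injective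
    (f := (B.subtype.comp (A.subgroupOf B).subtype).codRestrict A fun x => x.2)
    fun _ _ h => Subtype.ext <| Subtype.ext <| congrArg (Subtype.val : A → G) h

theorem isSolvable_of_isSolvable_map (f : G →* G') [Group.IsSolvable f.ker] (A : Subgroup G)
    [Group.IsSolvable (A.map f)] : Group.IsSolvable A :=
  Group.isSolvable_of_ker_le_range (f.ker.subgroupOf A).subtype (f.subgroupMap A) <| by
    rw [Subgroup.ker_subgroupMap, Subgroup.range_subtype]

theorem Subgroup.IsSubnormal.eq_top_of_sup_eq_top [Group.IsPerfect G] {N : Subgroup G} [N.Normal]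
    [Group.IsSolvable N] {T : Subgroup G} (hT : T.IsSubnormal) (hTN : T ⊔ N = ⊤) : T = ⊤ := by
  induction hT with
  | top => rfl
  | step H K hHK _ hHK_normal ih =>
    obtain rfl : K = ⊤ := ih (top_le_iff.mp (hTN ▸ sup_le_sup_right hHK N))
    have : H.Normal := Subgroup.normalizer_eq_top_iff.mp
      (top_le_iff.mp ((Subgroup.normal_subgroupOf_iff_le_normalizer hHK).mp hHK_normal))
    have hN : N.map (QuotientGroup.mk' H) = ⊤ := by
      rw [← Subgroup.map_top_of_surjective _ (QuotientGroup.mk'_surjective H), ← hTN,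
        Subgroup.map_sup, QuotientGroup.map_mk'_self, bot_sup_eq]
    have : Group.IsSolvable (G ⧸ H) := by
      have : Group.IsSolvable (⊤ : Subgroup (G ⧸ H)) := hN ▸ inferInstance
      let e : (⊤ : Subgroup (G ⧸ H)) ≃* G ⧸ H := Subgroup.topEquiv
      exact Group.isSolvable_of_surjective (f := e.toMonoidHom) e.surjective
    have : Subsingleton (G ⧸ H) := by
      by_contra h
      rw [not_subsingleton_iff_nontrivial] at h
      exact Group.IsPerfect.not_isSolvable (G ⧸ H) this
    exact QuotientGroup.subgroup_eq_top_of_subsingleton H this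

theorem Subgroup.IsSubnormal.eq_top_of_map_eq_top [Group.IsPerfect G] (f : G →* G')
    [Group.IsSolvable f.ker] {T : Subgroup G} (hT : T.IsSubnormal) (h : T.map f = ⊤) : T = ⊤ :=
  hT.eq_top_of_sup_eq_top (N := f.ker) (by rw [← Subgroup.comap_map_eq, h, Subgroup.comap_top])

instance Subgroup.isSolvable_center (Q : Type*) [Group Q] : Group.IsSolvable (Subgroup.center Q) :=
  Group.isSolvable_of_comm fun a b => Subtype.ext (Subgroup.mem_center_iff.mp b.2 a)

namespace IsQuasisimpleGroup

variable {Q : Type*} [Group Q]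

theorem isPerfect (hQ : IsQuasisimpleGroup Q) : Group.IsPerfect Q := ⟨hQ.1⟩

theorem nontrivial (hQ : IsQuasisimpleGroup Q) : Nontrivial Q :=
  have := hQ.2.toNontrivial
  (QuotientGroup.mk'_surjective (Subgroup.center Q)).nontrivial

theorem not_isSolvable (hQ : IsQuasisimpleGroup Q) : ¬ Group.IsSolvable Q :=
  have := hQ.isPerfect
  have := hQ.nontrivial
  Group.IsPerfect.not_isSolvable Q

theorem eq_top_or_le_center (hQ : IsQuasisimpleGroup Q) {T : Subgroup Q} (hT : T.IsSubnormal) :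
    T = ⊤ ∨ T ≤ Subgroup.center Q := by
  have := hQ.isPerfect
  have : Group.IsSolvable (QuotientGroup.mk' (Subgroup.center Q)).ker := by
    rw [QuotientGroup.ker_mk']
    infer_instance
  rcases (hT.map (QuotientGroup.mk'_surjective _)).eq_bot_or_top_of_isSimpleGroup hQ.2 with h | h
  · right
    rwa [Subgroup.map_eq_bot_iff, QuotientGroup.ker_mk'] at h
  · exact .inl (hT.eq_top_of_map_eq_top _ h)

theorem of_isSimpleGroup [IsSimpleGroup Q] [Group.IsPerfect Q] : IsQuasisimpleGroup Q := by
  have hcenter : Subgroup.center Q = ⊥ := by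
    refine (Subgroup.center Q).normal_of_characteristic.eq_bot_or_eq_top.resolve_right fun h => ?_
    exact Group.IsPerfect.not_isSolvable Q
      (Group.isSolvable_of_comm fun a b => Subgroup.mem_center_iff.mp (h ▸ Subgroup.mem_top b) a)
  refine ⟨Group.IsPerfect.commutator_eq_top, ?_⟩
  exact ((QuotientGroup.quotientMulEquivOfEq hcenter).trans QuotientGroup.quotientBot).isSimpleGroup

end IsQuasisimpleGroup

theorem le_solRadical {N : Subgroup G} [N.Normal] [Group.IsSolvable N] : N ≤ solRadical G :=
  le_sSup ⟨inferInstance, (inferInstance : Group.IsSolvable N)⟩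

theorem map_solRadical_le {f : G →* G'} (hf : Function.Surjective f) :
    (solRadical G).map f ≤ solRadical G' := by
  rw [solRadical, (Subgroup.gc_map_comap f).l_sSup]
  refine iSup₂_le fun N ⟨hN, hNs⟩ => ?_
  have : Group.IsSolvable N := hNs
  have := hN.map f hf
  exact le_solRadical

instance solRadical_characteristic : (solRadical G).Characteristic :=
  Subgroup.characteristic_iff_map_le.mpr fun φ => map_solRadical_le φ.surjective

theorem isSolvable_sup_of_normal_right (N M : Subgroup G) [M.Normal] [Group.IsSolvable N]
    [Group.IsSolvable M] : Group.IsSolvable ↥(N ⊔ M) := by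
  have : Group.IsSolvable (QuotientGroup.mk' M).ker := by rwa [QuotientGroup.ker_mk']
  have hmap : (N ⊔ M).map (QuotientGroup.mk' M) = N.map (QuotientGroup.mk' M) := by
    rw [Subgroup.map_sup, QuotientGroup.map_mk'_self, sup_bot_eq]
  have : Group.IsSolvable ((N ⊔ M).map (QuotientGroup.mk' M)) := hmap ▸ inferInstance
  exact isSolvable_of_isSolvable_map (QuotientGroup.mk' M) (N ⊔ M)

instance isSolvable_solRadical [Finite G] : Group.IsSolvable (solRadical G) := by
  have hclosed : SupClosed {N : Subgroup G | N.Normal ∧ Group.IsSolvable N} :=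
    fun N ⟨_, _⟩ M ⟨_, _⟩ => ⟨inferInstance, isSolvable_sup_of_normal_right N M⟩
  exact (hclosed.sSup_mem (Set.toFinite _) ⟨Subgroup.normal_bot, inferInstance⟩ subset_rfl).2

theorem normalizer_le_normalizer_map_solRadical (H : Subgroup G) :
    Subgroup.normalizer (H : Set G) ≤
      Subgroup.normalizer (((solRadical H).map H.subtype : Subgroup G) : Set G) := by
  intro g hg
  rw [Subgroup.mem_normalizer_iff_map_conj_eq] at hg ⊢
  let φ : H ≃* H := ((MulAut.conj g).subgroupMap H).trans (MulEquiv.subgroupCongr hg)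
  have hφ : H.subtype.comp φ.toMonoidHom = (MulAut.conj g : G →* G).comp H.subtype := rfl
  rw [Subgroup.map_map, ← hφ, ← Subgroup.map_map,
    Subgroup.characteristic_iff_map_eq.mp inferInstance φ]

theorem le_solRadical_of_isSubnormal [Finite G] {S : Subgroup G} (hS : S.IsSubnormal)
    [Group.IsSolvable S] : S ≤ solRadical G := by
  -- Descend a subnormal series: a solvable normal subgroup of `H ⊴ K` lies in `Sol(H)`, which is
  -- characteristic in `H`, hence normal in `K`.
  suffices ∀ K : Subgroup G, K.IsSubnormal → ∀ S ≤ K, (S.subgroupOf K).Normal →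
      Group.IsSolvable S → S ≤ solRadical G from
    this S hS S le_rfl (by rw [Subgroup.subgroupOf_self]; infer_instance) ‹_›
  intro K hK
  induction hK with
  | top =>
    intro S _ hS _
    have : S.Normal := Subgroup.normalizer_eq_top_iff.mp
      (top_le_iff.mp ((Subgroup.normal_subgroupOf_iff_le_normalizer le_top).mp hS))
    exact le_solRadical
  | step H K hHK _ hHK_normal ih =>
    intro S hSH hS _
    have hSM : S ≤ (solRadical H).map H.subtype := by
      rw [← Subgroup.map_subgroupOf_eq_of_le hSH]
      exact Subgroup.map_mono le_solRadical
    have hMK : (solRadical H).map H.subtype ≤ K := (Subgroup.map_subtype_le _).trans hHK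
    refine hSM.trans (ih _ hMK ?_ inferInstance)
    rw [Subgroup.normal_subgroupOf_iff_le_normalizer hMK]
    exact ((Subgroup.normal_subgroupOf_iff_le_normalizer hHK).mp hHK_normal).trans
      (normalizer_le_normalizer_map_solRadical H)

instance MonoidHom.isSolvable_ker_subgroupMap (f : G →* G') [Group.IsSolvable f.ker]
    (H : Subgroup G) : Group.IsSolvable (f.subgroupMap H).ker := by
  rw [Subgroup.ker_subgroupMap]
  infer_instance

instance isSolvable_ker_mk'_solRadical [Finite G] :
    Group.IsSolvable (QuotientGroup.mk' (solRadical G)).ker := by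
  rw [QuotientGroup.ker_mk']
  infer_instance

def Subgroup.IsMinimalNonsolvableSubnormal (K : Subgroup G) : Prop :=
  Minimal (fun S : Subgroup G => S.IsSubnormal ∧ ¬ Group.IsSolvable S) K

namespace Subgroup.IsMinimalNonsolvableSubnormal

variable {K : Subgroup G}

theorem isSolvable_or_eq_top_of_normal (hK : K.IsMinimalNonsolvableSubnormal) (N : Subgroup K)
    [N.Normal] : Group.IsSolvable N ∨ N = ⊤ := by
  refine or_iff_not_imp_left.mpr fun hN => ?_
  let e := N.equivMapOfInjective K.subtype K.subtype_injective
  have hNK : N.map K.subtype = K := hK.eq_of_le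
    ⟨(Subgroup.Normal.isSubnormal ‹N.Normal›).trans' hK.prop.1,
      fun _ => hN (Group.isSolvable_of_isSolvable_injective (f := e.toMonoidHom) e.injective)⟩
    (Subgroup.map_subtype_le N)
  rwa [← Subgroup.map_subtype_inj, ← MonoidHom.range_eq_map, Subgroup.range_subtype]

theorem isPerfect (hK : K.IsMinimalNonsolvableSubnormal) : Group.IsPerfect K := by
  refine ⟨(hK.isSolvable_or_eq_top_of_normal (_root_.commutator K)).resolve_left fun h => ?_⟩
  refine hK.prop.2 ?_
  exact (Group.isSolvable_iff_subgroup_quotient (_root_.commutator K)).mpr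
    ⟨h, inferInstanceAs (Group.IsSolvable (Abelianization K))⟩

variable [Finite G]

theorem isSimpleGroup_map_mk'_solRadical (hK : K.IsMinimalNonsolvableSubnormal) :
    IsSimpleGroup (K.map (QuotientGroup.mk' (solRadical G))) := by
  set f := (QuotientGroup.mk' (solRadical G)).subgroupMap K
  have hf := (QuotientGroup.mk' (solRadical G)).subgroupMap_surjective K
  have : Nontrivial (K.map (QuotientGroup.mk' (solRadical G))) := by
    by_contra h
    rw [not_nontrivial_iff_subsingleton] at h
    exact hK.prop.2 (isSolvable_of_isSolvable_map (QuotientGroup.mk' (solRadical G)) K)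
  refine ⟨fun N hN => ?_⟩
  have hNf := hN.comap f
  rcases hK.isSolvable_or_eq_top_of_normal (N.comap f) with h | h
  · left
    have hle : (N.comap f).map K.subtype ≤ solRadical G :=
      le_solRadical_of_isSubnormal (hNf.isSubnormal.trans' hK.prop.1)
    rw [← Subgroup.map_comap_eq_self_of_surjective hf N, Subgroup.map_eq_bot_iff,
      Subgroup.ker_subgroupMap, QuotientGroup.ker_mk']
    exact Subgroup.map_le_iff_le_comap.mp hle
  · right
    rw [← Subgroup.map_comap_eq_self_of_surjective hf N, h, Subgroup.map_top_of_surjective f hf]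

theorem isSolComponent (hK : K.IsMinimalNonsolvableSubnormal) : IsSolComponent K := by
  have := hK.isPerfect
  have := hK.isSimpleGroup_map_mk'_solRadical
  have : Group.IsPerfect (K.map (QuotientGroup.mk' (solRadical G))) := Group.IsPerfect.map _
  exact ⟨isSubnormal_iff_subgroup_isSubnormal.mpr hK.prop.1, Group.IsPerfect.commutator_eq_top,
    isSubnormal_iff_subgroup_isSubnormal.mpr (hK.prop.1.map (QuotientGroup.mk'_surjective _)),
    IsQuasisimpleGroup.of_isSimpleGroup⟩

end Subgroup.IsMinimalNonsolvableSubnormal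

theorem IsSolComponent.isMinimalNonsolvableSubnormal [Finite G] {K : Subgroup G}
    (hK : IsSolComponent K) : K.IsMinimalNonsolvableSubnormal := by
  obtain ⟨hK, hKperf, -, hQ⟩ := hK
  have : Group.IsPerfect K := ⟨hKperf⟩
  set f := (QuotientGroup.mk' (solRadical G)).subgroupMap K
  refine ⟨⟨isSubnormal_iff_subgroup_isSubnormal.mp hK,
    fun _ => hQ.not_isSolvable inferInstance⟩, ?_⟩
  rintro S ⟨hS, hSs⟩ hSK
  have hT : ((S.subgroupOf K).map f).IsSubnormal := hS.subgroupOf.map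
    ((QuotientGroup.mk' (solRadical G)).subgroupMap_surjective K)
  rcases hQ.eq_top_or_le_center hT with h | h
  · exact Subgroup.subgroupOf_eq_top.mp (hS.subgroupOf.eq_top_of_map_eq_top f h)
  · -- `S` is an extension of a subgroup of `Sol(G)` by an abelian group
    have : Group.IsSolvable ((S.subgroupOf K).map f) :=
      Group.isSolvable_of_isSolvable_injective (Subgroup.inclusion_injective h)
    have := isSolvable_of_isSolvable_map f (S.subgroupOf K)
    exact absurd (Group.isSolvable_of_isSolvable_injective
      (f := (Subgroup.subgroupOfEquivOfLe hSK).symm.toMonoidHom)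
      (Subgroup.subgroupOfEquivOfLe hSK).symm.injective) hSs

theorem isSolComponent_iff_isMinimalNonsolvableSubnormal [Finite G] {K : Subgroup G} :
    IsSolComponent K ↔ K.IsMinimalNonsolvableSubnormal :=
  ⟨IsSolComponent.isMinimalNonsolvableSubnormal, fun hK => hK.isSolComponent⟩

end

/-- `K` is a sol-component of `G` iff `K` is a minimal
nonsolvable subnormal subgroup of `G`. -/
theorem solComponent_iff_minimal_nonsolvable_subnormal
    {G : Type*} [Group G] [Finite G] (K : Subgroup G) :
    IsSolComponent K ↔
      IsSubnormal K ∧ ¬ IsSolvable ↥K ∧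
        ∀ S : Subgroup G, IsSubnormal S → S ≤ K → ¬ IsSolvable ↥S → S = K := by
  simp only [isSolComponent_iff_isMinimalNonsolvableSubnormal,
    Subgroup.IsMinimalNonsolvableSubnormal, minimal_iff, isSubnormal_iff_subgroup_isSubnormal,
    and_assoc]
  refine and_congr_right fun _ => and_congr_right fun _ => forall_congr' fun S => ?_
  exact ⟨fun h hS hSK hSs => (h ⟨hS, hSs⟩ hSK).symm,
    fun h ⟨hS, hSs⟩ hSK => (h hS hSK hSs).symm⟩
end

section
/- Let G be a finite group. Then Sol(G) normalizes every sol-component of G, i.e. for every sol-component K of G and every x ∈ Sol(G) one has xKx⁻¹ = K. -/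
open Pointwise

/-!
If `x` lies in a solvable normal subgroup `N`, the conjugate `H = xKx⁻¹` of a perfect subnormal
subgroup `K` is perfect and lies in `N K`. Walking down a subnormal series
`K = K₀ ⊴ K₁ ⊴ ⋯ ⊴ Kₙ = G`: once `H ≤ Kᵢ₊₁`, `H` normalizes `Kᵢ`, and its image in the
quotient of the normalizer of `Kᵢ` by `Kᵢ` lies in the image of `N`, a solvable group. A perfect subgroup of a solvable
group is trivial, so `H ≤ Kᵢ`. Thus every solvable normal subgroup normalizes `K`, and so does
their join `Sol(G)`.
-/

theorem IsSubnormal.subgroup_isSubnormal {G : Type*} [Group G] {H : Subgroup G}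
    (hH : IsSubnormal H) : H.IsSubnormal := by
  obtain ⟨n, c, rfl, hcn, hc⟩ := hH
  induction n generalizing c with
  | zero => exact hcn ▸ .top
  | succ n ih =>
    exact .step _ (c 1) (hc 0 n.succ_pos).1
      (ih (fun i => c (i + 1)) hcn fun i hi => hc (i + 1) (Nat.succ_lt_succ hi))
      (hc 0 n.succ_pos).2

namespace Subgroup

variable {G : Type*} [Group G]

theorem eq_bot_of_isPerfect_of_le_isSolvable {P S : Subgroup G} [Group.IsPerfect P]
    [Group.IsSolvable S] (hPS : P ≤ S) : P = ⊥ := by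
  have : Group.IsSolvable P := Group.isSolvable_of_isSolvable_injective (inclusion_injective hPS)
  by_contra hP
  have : Nontrivial P := (nontrivial_iff_ne_bot P).mpr hP
  exact Group.IsPerfect.not_isSolvable P ‹_›

theorem le_of_isPerfect_of_le_normalizer {K N H : Subgroup G} [N.Normal] [Group.IsSolvable N]
    [Group.IsPerfect H] (hHK : H ≤ normalizer K) (hHNK : H ≤ N ⊔ K) : H ≤ K := by
  let π := QuotientGroup.mk' (K.subgroupOf (normalizer K))
  let f : H →* normalizer K ⧸ K.subgroupOf (normalizer K) := π.comp (inclusion hHK)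
  let g : ↥(N ⊓ normalizer K) →* normalizer K ⧸ K.subgroupOf (normalizer K) :=
    π.comp (inclusion inf_le_right)
  have : Group.IsSolvable ↥(N ⊓ normalizer K) :=
    Group.isSolvable_of_isSolvable_injective (inclusion_injective inf_le_left)
  have : Group.IsSolvable g.range := Group.isSolvable_of_surjective g.rangeRestrict_surjective
  have hfg : f.range ≤ g.range := by
    rintro _ ⟨⟨h, hH⟩, rfl⟩
    obtain ⟨n, hn, k, hk, rfl⟩ : h ∈ (N : Set G) * K := normal_mul N K ▸ hHNK hH
    have hnK : n ∈ normalizer K := by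
      simpa using mul_mem (hHK hH) (inv_mem (le_normalizer hk))
    refine ⟨⟨n, hn, hnK⟩, QuotientGroup.eq.mpr ?_⟩
    simpa [mem_subgroupOf] using hk
  have : Group.IsPerfect f.range := Group.IsPerfect.range f
  have hf : f.range = ⊥ := eq_bot_of_isPerfect_of_le_isSolvable hfg
  intro h hH
  have : f ⟨h, hH⟩ = 1 := (MonoidHom.range_eq_bot_iff.mp hf) ▸ rfl
  simpa [f, π, QuotientGroup.eq_one_iff, mem_subgroupOf] using this

theorem IsSubnormal.le_of_isPerfect {K N H : Subgroup G} (hK : K.IsSubnormal) [N.Normal]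
    [Group.IsSolvable N] [Group.IsPerfect H] (hHNK : H ≤ N ⊔ K) : H ≤ K := by
  induction hK with
  | top => exact le_top
  | step K L hKL _ hKL_normal ih =>
    have hHL : H ≤ L := ih (hHNK.trans (sup_le_sup_left hKL N))
    have hLK : L ≤ normalizer K := (normal_subgroupOf_iff_le_normalizer hKL).mp hKL_normal
    exact le_of_isPerfect_of_le_normalizer (hHL.trans hLK) hHNK

theorem IsSubnormal.le_normalizer_of_isSolvable {K : Subgroup G} (hK : K.IsSubnormal)
    [Group.IsPerfect K] (N : Subgroup G) [N.Normal] [Group.IsSolvable N] :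
    N ≤ normalizer K := by
  refine le_normalizer_iff.mpr fun x hx k hk => ?_
  have : Group.IsPerfect (K.map (MulAut.conj x).toMonoidHom) := Group.IsPerfect.map _
  refine hK.le_of_isPerfect (N := N) ?_ (mem_map_of_mem (MulAut.conj x).toMonoidHom hk)
  rintro _ ⟨k, hk, rfl⟩
  have hcomm : x * (k * x⁻¹ * k⁻¹) ∈ N := mul_mem hx (Normal.conj_mem ‹_› _ (inv_mem hx) k)
  convert mul_mem_sup hcomm hk using 1
  simp [mul_assoc]

end Subgroup

theorem solRadical_normalizes_solComponent_general
    {G : Type*} [Group G] (K : Subgroup G) (hK : IsSolComponent K) :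
    ∀ x ∈ solRadical G, MulAut.conj x • K = K := by
  obtain ⟨hsub, hperf, -⟩ := hK
  have : Group.IsPerfect K := ⟨hperf⟩
  have hle : solRadical G ≤ Subgroup.normalizer (K : Set G) := by
    refine sSup_le ?_
    rintro N ⟨_, hNsol⟩
    have : Group.IsSolvable N := hNsol
    exact hsub.subgroup_isSubnormal.le_normalizer_of_isSolvable N
  exact fun x hx => Subgroup.mem_normalizer_iff_map_conj_eq.mp (hle hx)

/-- `Sol(G)` normalizes every sol-component of `G`: for every
sol-component `K` of `G` and every `x ∈ Sol(G)` one has `xKx⁻¹ = K`. -/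
theorem solRadical_normalizes_solComponent
    {G : Type*} [Group G] [Finite G] (K : Subgroup G) (hK : IsSolComponent K) :
    ∀ x ∈ solRadical G, MulAut.conj x • K = K :=
  solRadical_normalizes_solComponent_general K hK
end

section
/- Let G be a finite group, write Ḡ = G/Sol(G) and let π : G → Ḡ be the quotient map. Then the map K ↦ π(K) is a bijection from the set of sol-components of G onto the set of components of Ḡ. Its inverse sends a component K̄ of Ḡ to L^(∞), the stable (final) term of the derived series of the full preimage L = π⁻¹(K̄). -/
open Pointwise

/-- The stable (final) term `G^(∞)` of the derived series of a finite group: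
for a finite group the derived series is eventually constant and its stable
value is the infimum of its terms. -/
def stableDerived (G : Type*) [Group G] : Subgroup G :=
  ⨅ n : ℕ, derivedSeries G n


/-!
If `K` is a sol-component with image `C` in `G ⧸ Sol(G)`, the preimage of `C` is `K ⊔ Sol(G)`.
Intersect a subnormal series `K = c₀ ⊴ c₁ ⊴ ⋯ ⊴ cₙ = G` with `K ⊔ Sol(G)`: each factor is a
quotient of a subgroup of `Sol(G)`, hence solvable, so a perfect subgroup of one term lies in the
previous one. Hence the perfect core of `K ⊔ Sol(G)` is `K`, which gives injectivity and the
inverse map. Conversely, the perfect core of the preimage `L` of a component `C` is normal in the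
subnormal subgroup `L` and, `C` being perfect, maps onto `C`.
-/

namespace Subgroup

variable {G : Type*} [Group G]

theorem commutator_eq_self_iff {K : Subgroup G} : ⁅K, K⁆ = K ↔ _root_.commutator ↥K = ⊤ :=
  isPerfect_iff.symm.trans Group.isPerfect_def

theorem eq_bot_of_commutator_eq_self [Group.IsSolvable G] {P : Subgroup G}
    (hP : ⁅P, P⁆ = P) : P = ⊥ := by
  have : Group.IsPerfect P := isPerfect_iff.mpr hP
  by_contra hne
  have := (nontrivial_iff_ne_bot P).mpr hne
  exact Group.IsPerfect.not_isSolvable P inferInstance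

theorem le_ker_of_commutator_eq_self {Q : Type*} [Group Q] [Group.IsSolvable Q]
    (f : G →* Q) {P : Subgroup G} (hP : ⁅P, P⁆ = P) : P ≤ f.ker :=
  (map_eq_bot_iff P).mp <|
    eq_bot_of_commutator_eq_self (P := P.map f) (by rw [← map_commutator, hP])

theorem commutator_subgroupOf_eq_self {P N : Subgroup G} (hP : ⁅P, P⁆ = P)
    (hPN : P ≤ N) : ⁅P.subgroupOf N, P.subgroupOf N⁆ = P.subgroupOf N := by
  apply map_injective N.subtype_injective
  rw [map_commutator, subgroupOf_map_subtype, inf_of_le_left hPN, hP]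

/-- `N ⧸ M` is a quotient of the solvable group `N ⊓ S`. -/
theorem isSolvable_quotient_of_le_sup {M N S : Subgroup G} [S.Normal]
    [Group.IsSolvable S] [(M.subgroupOf N).Normal] (hMN : M ≤ N) (hN : N ≤ M ⊔ S) :
    Group.IsSolvable (N ⧸ M.subgroupOf N) := by
  have : Group.IsSolvable ↥(N ⊓ S) :=
    Group.isSolvable_of_isSolvable_injective
      (f := inclusion (inf_le_right : N ⊓ S ≤ S)) (inclusion_injective _)
  refine Group.isSolvable_of_surjective
    (f := (QuotientGroup.mk' (M.subgroupOf N)).comp (inclusion (inf_le_left : N ⊓ S ≤ N)))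
    ?_
  rintro ⟨x⟩
  obtain ⟨s, hs, m, hm, hsm⟩ := mem_sup_of_normal_left.mp (sup_comm M S ▸ hN x.2)
  have hsN : s ∈ N := by
    rw [eq_mul_inv_of_mul_eq hsm]
    exact mul_mem x.2 (inv_mem (hMN hm))
  refine ⟨⟨s, hsN, hs⟩, QuotientGroup.eq.mpr ?_⟩
  rw [mem_subgroupOf]
  simpa [← hsm] using hm

theorem le_of_le_sup_of_commutator_eq_self {P M N S : Subgroup G} [S.Normal]
    [Group.IsSolvable S] (hMN : M ≤ N) (hMN' : (M.subgroupOf N).Normal) (hN : N ≤ M ⊔ S)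
    (hP : ⁅P, P⁆ = P) (hPN : P ≤ N) : P ≤ M := by
  have := isSolvable_quotient_of_le_sup hMN hN
  have h := le_ker_of_commutator_eq_self (QuotientGroup.mk' (M.subgroupOf N))
    (commutator_subgroupOf_eq_self hP hPN)
  rw [QuotientGroup.ker_mk'] at h
  exact fun x hx => h (show (⟨x, hPN hx⟩ : N) ∈ P.subgroupOf N from hx)

end Subgroup

theorem isSolvable_solRadical_s6 {G : Type*} [Group G] [Finite G] :
    Group.IsSolvable (solRadical G) := by
  have hs : SupClosed {N : Subgroup G | N.Normal ∧ Group.IsSolvable N} := by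
    rintro N₁ ⟨_, _⟩ N₂ ⟨hN₂, _⟩
    have : (N₂.subgroupOf (N₁ ⊔ N₂)).Normal := hN₂.subgroupOf _
    have := Subgroup.isSolvable_quotient_of_le_sup (S := N₁) le_sup_right (sup_comm N₁ N₂).le
    refine ⟨inferInstance, (Group.isSolvable_iff_subgroup_quotient (N₂.subgroupOf (N₁ ⊔ N₂))).mpr
      ⟨Group.isSolvable_of_isSolvable_injective
        (f := (Subgroup.subgroupOfEquivOfLe (le_sup_right : N₂ ≤ N₁ ⊔ N₂)).toMonoidHom)
        (MulEquiv.injective _), inferInstance⟩⟩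
  exact (hs.sSup_mem (Set.toFinite _) ⟨inferInstance, inferInstance⟩ subset_rfl).2

section StableDerived

variable {G Q : Type*} [Group G] [Group Q]

theorem exists_stableDerived_eq_derivedSeries [Finite G] :
    ∃ m, stableDerived G = derivedSeries G m ∧ derivedSeries G (m + 1) = derivedSeries G m := by
  obtain ⟨m, hm⟩ := WellFoundedLT.antitone_chain_condition (derivedSeries_antitone (G := G))
  refine ⟨m, le_antisymm (iInf_le _ m) (le_iInf fun n => ?_), (hm _ m.le_succ).symm⟩
  rcases le_total n m with h | h
  · exact derivedSeries_antitone G h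
  · exact (hm n h).le

theorem le_stableDerived {P : Subgroup G} (hP : ⁅P, P⁆ = P) : P ≤ stableDerived G := by
  refine le_iInf fun n => ?_
  induction n with
  | zero => exact le_top
  | succ n ih =>
    exact hP.ge.trans ((Subgroup.commutator_mono ih ih).trans (derivedSeries_succ G n).ge)

theorem commutator_stableDerived [Finite G] :
    ⁅stableDerived G, stableDerived G⁆ = stableDerived G := by
  obtain ⟨m, hm, hstab⟩ := exists_stableDerived_eq_derivedSeries (G := G)
  rw [hm, ← derivedSeries_succ, hstab]

instance stableDerived_normal [Finite G] : (stableDerived G).Normal := by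
  obtain ⟨m, hm, -⟩ := exists_stableDerived_eq_derivedSeries (G := G)
  exact hm ▸ derivedSeries_normal G m

theorem map_derivedSeries_eq_range (f : G →* Q) (hf : ⁅f.range, f.range⁆ = f.range) (n : ℕ) :
    (derivedSeries G n).map f = f.range := by
  induction n with
  | zero => exact (MonoidHom.range_eq_map f).symm
  | succ n ih => rw [derivedSeries_succ, Subgroup.map_commutator, ih, hf]

theorem map_stableDerived_eq_range [Finite G] (f : G →* Q) (hf : ⁅f.range, f.range⁆ = f.range) :
    (stableDerived G).map f = f.range := by
  obtain ⟨m, hm, -⟩ := exists_stableDerived_eq_derivedSeries (G := G)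
  rw [hm, map_derivedSeries_eq_range f hf]

end StableDerived

namespace Subgroup

variable {G Q : Type*} [Group G] [Group Q]

/-- `L^(∞)` as a subgroup of the ambient group; for finite `G` it is the largest perfect
subgroup of `L`. -/
def perfectCore (L : Subgroup G) : Subgroup G :=
  (stableDerived L).map L.subtype

theorem perfectCore_le (L : Subgroup G) : perfectCore L ≤ L :=
  map_subtype_le _

theorem le_perfectCore {P L : Subgroup G} (hP : ⁅P, P⁆ = P) (hPL : P ≤ L) :
    P ≤ perfectCore L := by
  rw [← inf_of_le_left hPL, ← subgroupOf_map_subtype]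
  exact map_mono (le_stableDerived (commutator_subgroupOf_eq_self hP hPL))

theorem commutator_perfectCore [Finite G] (L : Subgroup G) :
    ⁅perfectCore L, perfectCore L⁆ = perfectCore L := by
  rw [perfectCore, ← map_commutator, commutator_stableDerived]

theorem perfectCore_eq_self [Finite G] {K : Subgroup G} (hK : ⁅K, K⁆ = K) : perfectCore K = K :=
  le_antisymm (perfectCore_le K) (le_perfectCore hK le_rfl)

theorem normal_perfectCore_subgroupOf [Finite G] (L : Subgroup G) :
    ((perfectCore L).subgroupOf L).Normal := by
  rw [perfectCore, subgroupOf, comap_map_eq_self_of_injective L.subtype_injective]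
  infer_instance

theorem map_perfectCore [Finite G] (f : G →* Q) {L : Subgroup G}
    (hL : ⁅L.map f, L.map f⁆ = L.map f) : (perfectCore L).map f = L.map f := by
  have hrange : (f.comp L.subtype).range = L.map f := by
    rw [MonoidHom.range_comp, range_subtype]
  rw [perfectCore, map_map, map_stableDerived_eq_range _ (hrange ▸ hL), hrange]

theorem perfectCore_le_perfectCore_of_le_sup [Finite G] {M N S : Subgroup G} [S.Normal]
    [Group.IsSolvable S] (hMN : M ≤ N) (hMN' : (M.subgroupOf N).Normal) (hN : N ≤ M ⊔ S) :
    perfectCore N ≤ perfectCore M :=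
  le_perfectCore (commutator_perfectCore N)
    (le_of_le_sup_of_commutator_eq_self hMN hMN' hN (commutator_perfectCore N) (perfectCore_le N))

theorem perfectCore_inf_sup_le_of_normal_subgroupOf [Finite G] {K S H H' : Subgroup G}
    [S.Normal] [Group.IsSolvable S] (hKH : K ≤ H) (hHH' : H ≤ H') [(H.subgroupOf H').Normal] :
    perfectCore (H' ⊓ (K ⊔ S)) ≤ perfectCore (H ⊓ (K ⊔ S)) := by
  refine perfectCore_le_perfectCore_of_le_sup (S := S) (inf_le_inf_right _ hHH')
    (inf_subgroupOf_inf_normal_of_left _) fun x hx => ?_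
  obtain ⟨k, hk, s, hs, rfl⟩ := mem_sup_of_normal_right.mp hx.2
  exact mul_mem_sup ⟨hKH hk, mem_sup_left hk⟩ hs

end Subgroup

section Subnormal

variable {G Q : Type*} [Group G] [Group Q]

theorem IsSubnormal.perfectCore_sup_eq [Finite G] {K S : Subgroup G} [S.Normal]
    [Group.IsSolvable S] (hK : IsSubnormal K) (hKK : ⁅K, K⁆ = K) :
    Subgroup.perfectCore (K ⊔ S) = K := by
  obtain ⟨n, c, hc0, hcn, hc⟩ := hK
  have key : ∀ i ≤ n, K ≤ c i ∧ Subgroup.perfectCore (c i ⊓ (K ⊔ S)) ≤ K := by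
    intro i
    induction i with
    | zero =>
      intro _
      rw [hc0, inf_of_le_left le_sup_left, Subgroup.perfectCore_eq_self hKK]
      exact ⟨le_rfl, le_rfl⟩
    | succ i ih =>
      intro hi
      obtain ⟨hKc, hcore⟩ := ih (by omega)
      obtain ⟨hle, hnormal⟩ := hc i (by omega)
      exact ⟨hKc.trans hle,
        (Subgroup.perfectCore_inf_sup_le_of_normal_subgroupOf hKc hle).trans hcore⟩
  refine le_antisymm ?_ (Subgroup.le_perfectCore hKK le_sup_left)
  simpa [hcn] using (key n le_rfl).2

theorem IsSubnormal.comap {H : Subgroup Q} (hH : IsSubnormal H) (f : G →* Q) :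
    IsSubnormal (H.comap f) := by
  obtain ⟨n, c, hc0, hcn, hc⟩ := hH
  refine ⟨n, fun i => (c i).comap f, congrArg _ hc0, (congrArg _ hcn).trans (Subgroup.comap_top f),
    fun i hi => ?_⟩
  obtain ⟨hle, hnormal⟩ := hc i hi
  refine ⟨Subgroup.comap_mono hle,
    (Subgroup.normal_subgroupOf_iff (Subgroup.comap_mono hle)).mpr fun a b ha hb => ?_⟩
  simpa only [Subgroup.mem_comap, map_mul, map_inv] using
    (Subgroup.normal_subgroupOf_iff hle).mp hnormal _ _ ha hb

theorem IsSubnormal.of_normal_subgroupOf {H L : Subgroup G} (hL : IsSubnormal L) (hHL : H ≤ L)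
    (hH : (H.subgroupOf L).Normal) : IsSubnormal H := by
  obtain ⟨n, c, hc0, hcn, hc⟩ := hL
  refine ⟨n + 1, fun | 0 => H | i + 1 => c i, rfl, hcn, fun i hi => ?_⟩
  rcases i with _ | i
  · show H ≤ c 0 ∧ (H.subgroupOf (c 0)).Normal
    exact hc0 ▸ ⟨hHL, hH⟩
  · exact hc i (by omega)

end Subnormal

section SolComponent

variable {G : Type*} [Group G] [Finite G]

theorem IsSolComponent.eq_perfectCore_comap_map {K : Subgroup G} (hK : IsSolComponent K) :
    K = ((K.map (QuotientGroup.mk' (solRadical G))).comap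
      (QuotientGroup.mk' (solRadical G))).perfectCore := by
  have := isSolvable_solRadical_s6 (G := G)
  rw [Subgroup.comap_map_eq, QuotientGroup.ker_mk',
    hK.1.perfectCore_sup_eq (Subgroup.commutator_eq_self_iff.mpr hK.2.1)]

theorem IsComponent.isSolComponent_perfectCore_comap {C : Subgroup (G ⧸ solRadical G)}
    (hC : IsComponent C) :
    IsSolComponent (C.comap (QuotientGroup.mk' (solRadical G))).perfectCore ∧
      (C.comap (QuotientGroup.mk' (solRadical G))).perfectCore.map
        (QuotientGroup.mk' (solRadical G)) = C := by
  have hC' : (C.comap (QuotientGroup.mk' (solRadical G))).map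
      (QuotientGroup.mk' (solRadical G)) = C :=
    Subgroup.map_comap_eq_self_of_surjective (QuotientGroup.mk'_surjective _) C
  have hmap := Subgroup.map_perfectCore (QuotientGroup.mk' (solRadical G))
    (by rw [hC']; exact Subgroup.commutator_eq_self_iff.mpr hC.2.1)
  rw [hC'] at hmap
  refine ⟨⟨(hC.1.comap _).of_normal_subgroupOf (Subgroup.perfectCore_le _)
    (Subgroup.normal_perfectCore_subgroupOf _),
    Subgroup.commutator_eq_self_iff.mp (Subgroup.commutator_perfectCore _), by rwa [hmap]⟩, hmap⟩

end SolComponent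

/-- The map `K ↦ π(K)` (image under the quotient map
`π : G → G/Sol(G)`) is a bijection from the set of sol-components of `G` onto the
set of components of `G/Sol(G)`; its inverse sends a component `K̄` of `G/Sol(G)` to
`L^(∞)`, the stable term of the derived series of the full preimage `L = π⁻¹(K̄)`. -/
theorem solComponents_biject_with_components_of_quotient
    {G : Type*} [Group G] [Finite G] :
    Set.BijOn (Subgroup.map (QuotientGroup.mk' (solRadical G)))
      {K : Subgroup G | IsSolComponent K}
      {C : Subgroup (G ⧸ solRadical G) | IsComponent C} ∧
    ∀ C : Subgroup (G ⧸ solRadical G), IsComponent C →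
      IsSolComponent
        ((stableDerived ↥(C.comap (QuotientGroup.mk' (solRadical G)))).map
          (C.comap (QuotientGroup.mk' (solRadical G))).subtype) ∧
      Subgroup.map (QuotientGroup.mk' (solRadical G))
        ((stableDerived ↥(C.comap (QuotientGroup.mk' (solRadical G)))).map
          (C.comap (QuotientGroup.mk' (solRadical G))).subtype) = C := by
  refine ⟨⟨fun K hK => hK.2.2, fun K₁ hK₁ K₂ hK₂ hmap => ?_, fun C hC => ?_⟩,
    fun C hC => hC.isSolComponent_perfectCore_comap⟩
  · rw [hK₁.eq_perfectCore_comap_map, hK₂.eq_perfectCore_comap_map, hmap]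
  · exact ⟨_, hC.isSolComponent_perfectCore_comap.1, hC.isSolComponent_perfectCore_comap.2⟩
end

section
/- Let G = K₁ × ⋯ × K_n be a direct product of nonabelian simple groups K₁, …, K_n with projections π_i : G → K_i, and let H be an overdiagonal subgroup of G. Then there exists a unique partition {𝓛₁, …, 𝓛_m} of {K₁, …, K_n} such that, writing G_j for the subgroup generated by the members of 𝓛_j, the group H is the internal direct product of the subgroups H ∩ G₁, …, H ∩ G_m, and for each j the subgroup H ∩ G_j is a diagonal subgroup of G_j. -/
/-!
Put `i ~ j` when the projections `π i` and `π j` have the same kernel on `H`; the blocks of the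
partition are the classes of `~`. If `H ∩ ker π j ≤ ker π i` held without the converse, then
`π j (H ∩ ker π i)` would be a nontrivial normal subgroup of the simple group `K j`, hence all of
`K j`, and this forces `π i H = 1`; so `j` determines `i` on `H` only when `i ~ j`. For `j ≁ i` the
same argument gives `π i (H ∩ ker π j) = K i`, and since `K i` is perfect, the identity
`π i ⁅A, B⁆ = ⁅π i A, π i B⁆` lets one intersect these finitely many kernels: `π i` maps the part of
`H` supported on the class of `i` onto `K i`, and injectively by the definition of `~`. Hence `H`
contains the projection of each of its elements onto each class, which makes it the direct
product of these diagonal parts. Conversely, `H` is closed under the block projections of any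
such decomposition, and diagonality forces its blocks to be the classes of `~`.
-/

theorem IsSimpleGroup.commutator_eq_top {Q : Type*} [Group Q] [IsSimpleGroup Q]
    (hQ : ¬ ∀ x y : Q, Commute x y) : ⁅(⊤ : Subgroup Q), (⊤ : Subgroup Q)⁆ = ⊤ := by
  refine (IsSimpleGroup.eq_bot_or_eq_top_of_normal _ inferInstance).resolve_left fun h => hQ ?_
  exact isMulCommutative_iff.mp ((commutator_eq_bot_iff Q).mp h)

namespace Subgroup

section

variable {G Q R : Type*} [Group G] [Group Q] [Group R]

theorem normal_map_inf_of_map_eq_top {H N : Subgroup G} [hN : N.Normal] {f : G →* Q}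
    (hH : H.map f = ⊤) : ((H ⊓ N).map f).Normal := by
  refine ⟨?_⟩
  rintro _ ⟨b, ⟨hbH, hbN⟩, rfl⟩ q
  obtain ⟨h, hh, rfl⟩ : q ∈ H.map f := hH ▸ mem_top q
  exact ⟨h * b * h⁻¹, ⟨H.mul_mem (H.mul_mem hh hbH) (H.inv_mem hh), hN.conj_mem b hbN h⟩,
    by simp⟩

theorem map_inf_eq_top_of_not_le_ker [IsSimpleGroup Q] {H N : Subgroup G} [N.Normal]
    {f : G →* Q} (hH : H.map f = ⊤) (hN : ¬ H ⊓ N ≤ f.ker) : (H ⊓ N).map f = ⊤ :=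
  (IsSimpleGroup.eq_bot_or_eq_top_of_normal _ (normal_map_inf_of_map_eq_top hH)).resolve_left
    (by rwa [map_eq_bot_iff])

theorem map_inf_inf_eq_top (hQ : ⁅(⊤ : Subgroup Q), (⊤ : Subgroup Q)⁆ = ⊤)
    {H M N : Subgroup G} [M.Normal] [N.Normal] {f : G →* Q} (hM : (H ⊓ M).map f = ⊤)
    (hN : (H ⊓ N).map f = ⊤) : (H ⊓ (M ⊓ N)).map f = ⊤ := by
  have hle : ⁅H ⊓ M, H ⊓ N⁆ ≤ H ⊓ (M ⊓ N) :=
    le_inf ((commutator_mono inf_le_left inf_le_left).trans H.commutator_le_self)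
      ((commutator_mono inf_le_right inf_le_right).trans (commutator_le_inf M N))
  refine eq_top_iff.mpr ?_
  calc ⊤ = ⁅(H ⊓ M).map f, (H ⊓ N).map f⁆ := by rw [hM, hN, hQ]
    _ = ⁅H ⊓ M, H ⊓ N⁆.map f := (map_commutator _ _ f).symm
    _ ≤ (H ⊓ (M ⊓ N)).map f := map_mono hle

theorem map_inf_biInf_eq_top {ι : Type*} (hQ : ⁅(⊤ : Subgroup Q), (⊤ : Subgroup Q)⁆ = ⊤)
    {H : Subgroup G} {f : G →* Q} (hH : H.map f = ⊤) {M : ι → Subgroup G}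
    [hM : ∀ j, (M j).Normal] {T : Set ι} (hT : T.Finite) (hMT : ∀ j ∈ T, (H ⊓ M j).map f = ⊤) :
    (H ⊓ ⨅ j ∈ T, M j).map f = ⊤ := by
  induction T, hT using Set.Finite.induction_on with
  | empty => simpa using hH
  | @insert a T _ _ ih =>
    have : (⨅ j ∈ T, M j).Normal := normal_iInf_normal fun j => normal_iInf_normal fun _ => hM j
    rw [iInf_insert]
    exact map_inf_inf_eq_top hQ (hMT a (Set.mem_insert a T))
      (ih fun j hj => hMT j (Set.mem_insert_of_mem a hj))

theorem map_eq_bot_of_inf_ker_le {H : Subgroup G} {f : G →* Q} {g : G →* R}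
    (hf : (H ⊓ g.ker).map f = ⊤) (hg : H ⊓ f.ker ≤ g.ker) : H.map g = ⊥ := by
  refine (map_eq_bot_iff H).mpr fun a ha => ?_
  obtain ⟨b, ⟨hbH, hbg⟩, hb⟩ : (f a)⁻¹ ∈ (H ⊓ g.ker).map f := hf ▸ mem_top _
  have hab : g (a * b) = 1 := hg ⟨H.mul_mem ha hbH, by simp [hb]⟩
  have hgb : g b = 1 := hbg
  simpa [hgb] using hab

end

section

variable {ι : Type*} {K : ι → Type*} [∀ i, Group (K i)]

theorem pi_bot_eq_iInf_ker (T : Set ι) :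
    pi T (fun i => (⊥ : Subgroup (K i))) = ⨅ j ∈ T, (Pi.evalMonoidHom K j).ker := by
  ext x
  simp [mem_pi, mem_iInf]

theorem commute_of_mem_pi_bot_compl {s t : Set ι} (hst : Disjoint s t) {x y : ∀ i, K i}
    (hx : x ∈ pi sᶜ fun i => (⊥ : Subgroup (K i))) (hy : y ∈ pi tᶜ fun i => (⊥ : Subgroup (K i))) :
    Commute x y := by
  funext i
  by_cases hi : i ∈ s
  · simp [mem_bot.mp (hy i (Set.disjoint_left.mp hst hi))]
  · simp [mem_bot.mp (hx i hi)]

/-- The subgroup `H ∩ G_s`, where `G_s` is the product of the factors indexed by `s`. -/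
abbrev blockPart (H : Subgroup (∀ i, K i)) (s : Set ι) : Subgroup (∀ i, K i) :=
  H ⊓ pi sᶜ fun i => (⊥ : Subgroup (K i))

variable {H : Subgroup (∀ i, K i)}

theorem blockPart_inf_iSup_eq_bot {P : Set (Set ι)} (hP : P.PairwiseDisjoint id) {s : Set ι}
    (hs : s ∈ P) :
    H.blockPart s ⊓ ⨆ t ∈ P, ⨆ _ : t ≠ s, H.blockPart t = ⊥ := by
  have hle : ⨆ t ∈ P, ⨆ _ : t ≠ s, H.blockPart t ≤ pi s fun _ => ⊥ := by
    refine iSup₂_le fun t ht => iSup_le fun hts x hx i hi => hx.2 i ?_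
    exact Set.disjoint_right.mp (hP ht hs hts) hi
  refine eq_bot_iff.mpr fun x hx => ?_
  have hx' := hle hx.2
  ext i
  by_cases hi : i ∈ s
  · exact mem_bot.mp (hx' i hi)
  · exact mem_bot.mp (hx.1.2 i hi)

open scoped Classical in
noncomputable def blockProj (s : Set ι) : (∀ i, K i) →* ∀ i, K i where
  toFun x i := if i ∈ s then x i else 1
  map_one' := by funext i; simp
  map_mul' x y := by
    funext i
    by_cases hi : i ∈ s <;> simp [hi]

theorem blockProj_apply_of_mem {s : Set ι} (x : ∀ i, K i) {i : ι} (hi : i ∈ s) :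
    blockProj s x i = x i := by
  simp [blockProj, hi]

theorem blockProj_apply_of_notMem {s : Set ι} (x : ∀ i, K i) {i : ι} (hi : i ∉ s) :
    blockProj s x i = 1 := by
  simp [blockProj, hi]

theorem blockProj_mem_pi_bot_compl (s : Set ι) (x : ∀ i, K i) :
    blockProj s x ∈ pi sᶜ fun i => (⊥ : Subgroup (K i)) :=
  fun _ hi => blockProj_apply_of_notMem x hi

theorem blockProj_eq_self {s : Set ι} {x : ∀ i, K i}
    (hx : x ∈ pi sᶜ fun i => (⊥ : Subgroup (K i))) : blockProj s x = x := by
  funext i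
  by_cases hi : i ∈ s
  · exact blockProj_apply_of_mem x hi
  · rw [blockProj_apply_of_notMem x hi, mem_bot.mp (hx i hi)]

theorem blockProj_eq_one {s t : Set ι} (hst : Disjoint s t) {x : ∀ i, K i}
    (hx : x ∈ pi tᶜ fun i => (⊥ : Subgroup (K i))) : blockProj s x = 1 := by
  funext i
  by_cases hi : i ∈ s
  · rw [blockProj_apply_of_mem x hi, mem_bot.mp (hx i (Set.disjoint_left.mp hst hi))]; rfl
  · exact blockProj_apply_of_notMem x hi

theorem blockProj_mul_blockProj_compl (s : Set ι) (x : ∀ i, K i) :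
    blockProj s x * blockProj sᶜ x = x := by
  funext i
  by_cases hi : i ∈ s
  · simp [blockProj_apply_of_mem x hi, blockProj_apply_of_notMem x (Set.notMem_compl_iff.mpr hi)]
  · simp [blockProj_apply_of_notMem x hi, blockProj_apply_of_mem x (Set.mem_compl hi)]

theorem blockProj_mem_blockPart_of_le_iSup {P : Set (Set ι)}
    (hP : P.PairwiseDisjoint id) (hH : H ≤ ⨆ t ∈ P, H.blockPart t) {s : Set ι} (hs : s ∈ P)
    {x : ∀ i, K i} (hx : x ∈ H) : blockProj s x ∈ H.blockPart s := by
  have hmap : (⨆ t ∈ P, H.blockPart t).map (blockProj s) ≤ H.blockPart s := by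
    simp only [map_iSup, iSup_le_iff, map_le_iff_le_comap]
    intro t ht y hy
    rcases eq_or_ne t s with rfl | hts
    · rwa [mem_comap, blockProj_eq_self hy.2]
    · rw [mem_comap, blockProj_eq_one (s := s) (hP hs ht hts.symm) hy.2]
      exact one_mem _
  exact hmap (mem_map_of_mem _ (hH hx))

theorem iSup_blockPart_eq_of_blockProj_mem [Finite ι] {P : Set (Set ι)}
    (hP : ∀ i, ∃ s ∈ P, i ∈ s) (hH : ∀ s ∈ P, ∀ x ∈ H, blockProj s x ∈ H) :
    ⨆ s ∈ P, H.blockPart s = H := by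
  refine le_antisymm (iSup₂_le fun _ _ => inf_le_left) fun x hx => ?_
  suffices ∀ T : Set ι, T.Finite → ∀ x ∈ H, (∀ i ∉ T, x i = 1) → x ∈ ⨆ s ∈ P, H.blockPart s from
    this Set.univ Set.finite_univ x hx fun i hi => absurd (Set.mem_univ i) hi
  intro T hT
  induction T, hT using Set.Finite.induction_on with
  | empty =>
    intro x _ hx
    rw [show x = 1 from funext fun i => hx i (Set.notMem_empty i)]
    exact one_mem _
  | @insert a T _ _ ih =>
    intro x hx hxT
    obtain ⟨s, hs, has⟩ := hP a
    have hxs : blockProj s x ∈ H.blockPart s := ⟨hH s hs x hx, blockProj_mem_pi_bot_compl s x⟩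
    have hxsc : blockProj sᶜ x ∈ H := by
      rw [eq_inv_mul_of_mul_eq (blockProj_mul_blockProj_compl s x)]
      exact H.mul_mem (H.inv_mem hxs.1) hx
    rw [← blockProj_mul_blockProj_compl s x]
    refine mul_mem (mem_iSup_of_mem s (mem_iSup_of_mem hs hxs)) (ih _ hxsc fun i hi => ?_)
    by_cases his : i ∈ s
    · exact blockProj_apply_of_notMem x (Set.notMem_compl_iff.mpr his)
    · rw [blockProj_apply_of_mem x his]
      exact hxT i fun h => h.elim (fun hia => his (hia ▸ has)) hi

variable (H) in
def kerSetoid : Setoid ι :=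
  Setoid.ker fun i => H ⊓ (Pi.evalMonoidHom K i).ker

theorem kerSetoid_iff {i j : ι} :
    H.kerSetoid i j ↔ H ⊓ (Pi.evalMonoidHom K i).ker = H ⊓ (Pi.evalMonoidHom K j).ker :=
  Setoid.ker_def

theorem apply_eq_one_of_kerSetoid {i j : ι} (hij : H.kerSetoid i j) {x : ∀ i, K i} (hx : x ∈ H)
    (hxj : x j = 1) : x i = 1 :=
  (kerSetoid_iff.mp hij ▸ ⟨hx, hxj⟩ : x ∈ H ⊓ (Pi.evalMonoidHom K i).ker).2

theorem kerSetoid_of_inf_ker_le [∀ i, IsSimpleGroup (K i)]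
    (hover : ∀ i, H.map (Pi.evalMonoidHom K i) = ⊤) {i j : ι}
    (hji : H ⊓ (Pi.evalMonoidHom K j).ker ≤ (Pi.evalMonoidHom K i).ker) : H.kerSetoid i j := by
  have hij : H ⊓ (Pi.evalMonoidHom K i).ker ≤ (Pi.evalMonoidHom K j).ker := by
    by_contra hij
    have hbot := map_eq_bot_of_inf_ker_le (map_inf_eq_top_of_not_le_ker (hover j) hij) hji
    exact top_ne_bot ((hover i).symm.trans hbot)
  exact kerSetoid_iff.mpr (le_antisymm (le_inf inf_le_left hij) (le_inf inf_le_left hji))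

theorem map_blockPart_kerSetoid_eq_top [Finite ι] [∀ i, IsSimpleGroup (K i)]
    (hover : ∀ i, H.map (Pi.evalMonoidHom K i) = ⊤)
    (hK : ∀ i, ⁅(⊤ : Subgroup (K i)), (⊤ : Subgroup (K i))⁆ = ⊤)
    (i : ι) : (H.blockPart {j | H.kerSetoid j i}).map (Pi.evalMonoidHom K i) = ⊤ := by
  rw [blockPart, pi_bot_eq_iInf_ker]
  refine map_inf_biInf_eq_top (hK i) (hover i) (Set.toFinite _) fun j hj => ?_
  exact map_inf_eq_top_of_not_le_ker (hover i) fun hle =>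
    hj (H.kerSetoid.symm (kerSetoid_of_inf_ker_le hover hle))

theorem injective_eval_blockPart_kerSetoid (i : ι) :
    Function.Injective fun x : H.blockPart {j | H.kerSetoid j i} =>
      Pi.evalMonoidHom K i (x : ∀ j, K j) := by
  refine (injective_iff_map_eq_one
    ((Pi.evalMonoidHom K i).domRestrict (H.blockPart {j | H.kerSetoid j i}))).mpr fun x hx => ?_
  refine Subtype.ext (funext fun j => ?_)
  by_cases hj : H.kerSetoid j i
  · exact apply_eq_one_of_kerSetoid hj x.2.1 hx
  · exact mem_bot.mp (x.2.2 j hj)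

theorem bijective_eval_blockPart_kerSetoid [Finite ι] [∀ i, IsSimpleGroup (K i)]
    (hover : ∀ i, H.map (Pi.evalMonoidHom K i) = ⊤)
    (hK : ∀ i, ⁅(⊤ : Subgroup (K i)), (⊤ : Subgroup (K i))⁆ = ⊤) (i : ι) :
    Function.Bijective fun x : H.blockPart {j | H.kerSetoid j i} =>
      Pi.evalMonoidHom K i (x : ∀ j, K j) := by
  refine ⟨injective_eval_blockPart_kerSetoid i, fun y => ?_⟩
  obtain ⟨x, hx, rfl⟩ := map_blockPart_kerSetoid_eq_top hover hK i ▸ mem_top y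
  exact ⟨⟨x, hx⟩, rfl⟩

theorem blockProj_kerSetoid_mem [Finite ι] [∀ i, IsSimpleGroup (K i)]
    (hover : ∀ i, H.map (Pi.evalMonoidHom K i) = ⊤)
    (hK : ∀ i, ⁅(⊤ : Subgroup (K i)), (⊤ : Subgroup (K i))⁆ = ⊤) (i : ι) {x : ∀ i, K i}
    (hx : x ∈ H) : blockProj {j | H.kerSetoid j i} x ∈ H := by
  obtain ⟨g, hg, hgx⟩ : x i ∈ (H.blockPart {j | H.kerSetoid j i}).map (Pi.evalMonoidHom K i) :=
    map_blockPart_kerSetoid_eq_top hover hK i ▸ mem_top _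
  suffices g = blockProj _ x from this ▸ hg.1
  funext j
  by_cases hj : H.kerSetoid j i
  · have hgxj := apply_eq_one_of_kerSetoid hj (H.mul_mem (H.inv_mem hg.1) hx) (by simp [← hgx])
    rw [blockProj_apply_of_mem x hj]
    simpa [inv_mul_eq_one] using hgxj
  · rw [blockProj_apply_of_notMem x hj]
    exact mem_bot.mp (hg.2 j hj)

theorem inf_ker_le_ker_of_mem_block {Q : Set (Set ι)} (hQ : Q.PairwiseDisjoint id)
    (hjoin : H ≤ ⨆ s ∈ Q, H.blockPart s) {s : Set ι} (hs : s ∈ Q) {i j : ι} (hi : i ∈ s)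
    (hj : j ∈ s)
    (hinj : Function.Injective fun x : H.blockPart s => Pi.evalMonoidHom K j (x : ∀ j, K j)) :
    H ⊓ (Pi.evalMonoidHom K j).ker ≤ (Pi.evalMonoidHom K i).ker := by
  rintro x ⟨hx, hxj⟩
  have hproj := blockProj_mem_blockPart_of_le_iSup hQ hjoin hs hx
  have hone : blockProj s x = 1 := congrArg Subtype.val
    (hinj (a₁ := ⟨_, hproj⟩) (a₂ := 1) (by simpa [blockProj_apply_of_mem x hj] using hxj))
  simpa [blockProj_apply_of_mem x hi] using congrFun hone i

theorem mem_block_of_kerSetoid [∀ i, Nontrivial (K i)] {Q : Set (Set ι)}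
    (hQ : Setoid.IsPartition Q)
    (hsurj : ∀ s ∈ Q, ∀ j ∈ s,
      Function.Surjective fun x : H.blockPart s => Pi.evalMonoidHom K j (x : ∀ j, K j))
    {s : Set ι} (hs : s ∈ Q) {i j : ι} (hi : i ∈ s) (hij : H.kerSetoid j i) : j ∈ s := by
  obtain ⟨t, ⟨ht, hjt⟩, -⟩ := hQ.2 j
  obtain rfl | hts := eq_or_ne t s
  · exact hjt
  obtain ⟨y, hy⟩ := exists_ne (1 : K j)
  obtain ⟨⟨x, hx⟩, rfl⟩ := hsurj t ht j hjt y
  have hit : i ∉ t := Set.disjoint_right.mp (hQ.pairwiseDisjoint ht hs hts) hi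
  exact (hy (apply_eq_one_of_kerSetoid hij hx.1 (mem_bot.mp (hx.2 i hit)))).elim

theorem eq_kerSetoid_classes [∀ i, Nontrivial (K i)] {Q : Set (Set ι)}
    (hQ : Setoid.IsPartition Q) (hjoin : H ≤ ⨆ s ∈ Q, H.blockPart s)
    (hdiag : ∀ s ∈ Q, ∀ i ∈ s,
      Function.Bijective fun x : H.blockPart s => Pi.evalMonoidHom K i (x : ∀ j, K j)) :
    Q = H.kerSetoid.classes := by
  have hblock : ∀ s ∈ Q, ∀ i ∈ s, s = {j | H.kerSetoid j i} := by
    refine fun s hs i hi => Set.ext fun j => ⟨fun hj => ?_, mem_block_of_kerSetoid hQ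
      (fun s hs j hj => (hdiag s hs j hj).2) hs hi⟩
    have hle : ∀ {a b}, a ∈ s → b ∈ s →
        H ⊓ (Pi.evalMonoidHom K b).ker ≤ (Pi.evalMonoidHom K a).ker := fun ha hb =>
      inf_ker_le_ker_of_mem_block hQ.pairwiseDisjoint hjoin hs ha hb (hdiag s hs _ hb).1
    exact kerSetoid_iff.mpr (le_antisymm (le_inf inf_le_left (hle hi hj))
      (le_inf inf_le_left (hle hj hi)))
  ext s
  constructor
  · intro hs
    obtain ⟨i, hi⟩ := Set.nonempty_iff_ne_empty.mpr (ne_of_mem_of_not_mem hs hQ.1)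
    exact hblock s hs i hi ▸ H.kerSetoid.mem_classes i
  · rintro ⟨i, rfl⟩
    obtain ⟨t, ⟨ht, hit⟩, -⟩ := hQ.2 i
    exact hblock t ht i hit ▸ ht

end

end Subgroup

theorem overdiagonal_unique_partition_into_diagonals_general
    {n : ℕ} (K : Fin n → Type*) [∀ i, Group (K i)]
    [∀ i, IsSimpleGroup (K i)] (hna : ∀ i, ¬ ∀ x y : K i, Commute x y)
    (H : Subgroup (∀ i, K i))
    (hover : ∀ i, H.map (Pi.evalMonoidHom K i) = ⊤) :
    ∃! P : Set (Set (Fin n)),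
      Setoid.IsPartition P ∧
      (∀ s ∈ P, ∀ t ∈ P, s ≠ t →
        ∀ x ∈ H ⊓ Subgroup.pi sᶜ (fun i => (⊥ : Subgroup (K i))),
          ∀ y ∈ H ⊓ Subgroup.pi tᶜ (fun i => (⊥ : Subgroup (K i))), Commute x y) ∧
      (⨆ s ∈ P, (H ⊓ Subgroup.pi sᶜ (fun i => (⊥ : Subgroup (K i))))) = H ∧
      (∀ s ∈ P,
        (H ⊓ Subgroup.pi sᶜ (fun i => (⊥ : Subgroup (K i)))) ⊓
          (⨆ t ∈ P, ⨆ _ : t ≠ s, (H ⊓ Subgroup.pi tᶜ (fun i => (⊥ : Subgroup (K i))))) = ⊥) ∧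
      (∀ s ∈ P, ∀ i ∈ s,
        Function.Bijective
          (fun x : ↥(H ⊓ Subgroup.pi sᶜ (fun i => (⊥ : Subgroup (K i)))) =>
            Pi.evalMonoidHom K i (x : ∀ j, K j))) := by
  have hK i := IsSimpleGroup.commutator_eq_top (hna i)
  have hpart := H.kerSetoid.isPartition_classes
  have hdisj := hpart.pairwiseDisjoint
  refine ⟨H.kerSetoid.classes,
    ⟨hpart, ?_, ?_, fun s hs => H.blockPart_inf_iSup_eq_bot hdisj hs, ?_⟩,
    fun Q hQ => H.eq_kerSetoid_classes hQ.1 hQ.2.2.1.ge hQ.2.2.2.2⟩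
  · exact fun s hs t ht hst x hx y hy =>
      Subgroup.commute_of_mem_pi_bot_compl (hdisj hs ht hst) hx.2 hy.2
  · refine H.iSup_blockPart_eq_of_blockProj_mem
      (fun i => ⟨_, H.kerSetoid.mem_classes i, H.kerSetoid.refl i⟩) ?_
    rintro _ ⟨i, rfl⟩ x hx
    exact H.blockProj_kerSetoid_mem hover hK i hx
  · rintro _ ⟨a, rfl⟩ i hi
    rw [Setoid.eq_of_mem_classes (H.kerSetoid.mem_classes a) hi (H.kerSetoid.mem_classes i)
      (H.kerSetoid.refl i)]
    exact H.bijective_eval_blockPart_kerSetoid hover hK i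

/-- Let `G = K₁ × ⋯ × K_n` be a direct product of nonabelian simple
groups with projections `π i`, and let `H` be an overdiagonal subgroup of `G`
(i.e. `π i (H) = K i` for every `i`).  Then there is a unique partition
`P` of the set of factors (formalized as a partition of the index set `Fin n`) such
that, writing `G_s = {x | x i = 1 for i ∉ s}` for the subgroup generated by the
factors in a block `s`, the subgroup `H` is the internal direct product of the
subgroups `H ⊓ G_s` for `s ∈ P` (they pairwise commute elementwise, their join is
`H`, and each meets the join of the others trivially), and for each `s ∈ P` the
subgroup `H ⊓ G_s` is a diagonal subgroup of `G_s` (for every `i ∈ s` the projection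
`π i` restricts to an isomorphism of `H ⊓ G_s` onto `K i`). -/
theorem overdiagonal_unique_partition_into_diagonals
    {n : ℕ} (K : Fin n → Type*) [∀ i, Group (K i)] [∀ i, Finite (K i)]
    [∀ i, IsSimpleGroup (K i)] (hna : ∀ i, ¬ ∀ x y : K i, Commute x y)
    (H : Subgroup (∀ i, K i))
    (hover : ∀ i, H.map (Pi.evalMonoidHom K i) = ⊤) :
    ∃! P : Set (Set (Fin n)),
      Setoid.IsPartition P ∧
      (∀ s ∈ P, ∀ t ∈ P, s ≠ t →
        ∀ x ∈ H ⊓ Subgroup.pi sᶜ (fun i => (⊥ : Subgroup (K i))),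
          ∀ y ∈ H ⊓ Subgroup.pi tᶜ (fun i => (⊥ : Subgroup (K i))), Commute x y) ∧
      (⨆ s ∈ P, (H ⊓ Subgroup.pi sᶜ (fun i => (⊥ : Subgroup (K i))))) = H ∧
      (∀ s ∈ P,
        (H ⊓ Subgroup.pi sᶜ (fun i => (⊥ : Subgroup (K i)))) ⊓
          (⨆ t ∈ P, ⨆ _ : t ≠ s, (H ⊓ Subgroup.pi tᶜ (fun i => (⊥ : Subgroup (K i))))) = ⊥) ∧
      (∀ s ∈ P, ∀ i ∈ s,
        Function.Bijective
          (fun x : ↥(H ⊓ Subgroup.pi sᶜ (fun i => (⊥ : Subgroup (K i)))) =>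
            Pi.evalMonoidHom K i (x : ∀ j, K j))) :=
  overdiagonal_unique_partition_into_diagonals_general K hna H hover
end

section
/- Let A be a group acting by automorphisms on the finite group G, and suppose G is A-simple. Then there exist nonabelian simple subgroups K₁, …, K_n of G such that G is the internal direct product of K₁, …, K_n (they pairwise commute elementwise, generate G, and each meets the product of the others trivially) and A permutes the set {K₁, …, K_n} transitively (for all i, j there is a ∈ A with a(K_i) = K_j). -/
/-!
Take a minimal normal subgroup `K₀` of `G`. Its `A`-translates are again minimal normal, so two
distinct ones meet trivially and therefore commute elementwise; their join is normal and
`A`-invariant, hence all of `G`. If `K₀` were abelian, `G` would be abelian too, so each translate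
`K` is nonabelian. Since the other translates centralize `K`, `K` cannot lie in their join, and by
minimality it meets that join trivially. Finally `G = K ⊔ C_G(K)` normalizes every normal subgroup
of `K`, so minimality makes `K` simple.
-/
open Pointwise

/-- `G` is *`A`-simple* (with `A` acting via `φ : A →* MulAut G`) if `G` is nonabelian
and the only `A`-invariant normal subgroups of `G` are `1` and `G`. -/
def IsMulASimple {A G : Type*} [Group A] [Group G] (φ : A →* MulAut G) : Prop :=
  (¬ ∀ x y : G, Commute x y) ∧
    ∀ N : Subgroup G, N.Normal → (∀ a : A, φ a • N = N) → N = ⊥ ∨ N = ⊤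

/-- The homomorphism `MulAut G →* MulAut (G ⧸ Z(G))` induced by passing to the
quotient by the center (which is characteristic). -/
def centerQuotHom (G : Type*) [Group G] :
    MulAut G →* MulAut (G ⧸ Subgroup.center G) where
  toFun e := QuotientGroup.congr (Subgroup.center G) (Subgroup.center G) e
      (Subgroup.characteristic_iff_map_eq.mp inferInstance e)
  map_one' := by
    ext x
    induction x using QuotientGroup.induction_on with
    | H x => rfl
  map_mul' e f := by
    ext x
    induction x using QuotientGroup.induction_on with
    | H x => rfl

/-- `G` is *`A`-quasisimple* (with `A` acting via `φ`) if `G` is perfect and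
`G/Z(G)` is `A`-simple with respect to the induced action. -/
def IsAQuasisimple {A G : Type*} [Group A] [Group G] (φ : A →* MulAut G) : Prop :=
  commutator G = ⊤ ∧ IsMulASimple ((centerQuotHom G).comp φ)

namespace Subgroup

variable {G : Type*} [Group G]

theorem le_centralizer_self_iff_forall_commute {H : Subgroup G} :
    H ≤ centralizer H ↔ ∀ x y : H, Commute x y :=
  ⟨fun h x y => Subtype.ext (h y.2 x x.2),
    fun h _ hx y hy => congrArg Subtype.val (h ⟨y, hy⟩ ⟨_, hx⟩)⟩

theorem Normal.smul {N : Subgroup G} (hN : N.Normal) (e : MulAut G) : (e • N).Normal :=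
  hN.map _ e.surjective

theorem smul_le_centralizer_smul {H : Subgroup G} (hH : H ≤ centralizer H) (e : MulAut G) :
    e • H ≤ centralizer (e • H : Subgroup G) := by
  rw [pointwise_smul_def]
  exact (map_mono hH).trans (map_centralizer_le_centralizer_image _ _)

theorem smul_iSup {ι : Sort*} (e : MulAut G) (H : ι → Subgroup G) :
    e • ⨆ i, H i = ⨆ i, e • H i := by
  simp only [pointwise_smul_def]
  exact map_iSup _ H

def IsMinimalNormal (N : Subgroup G) : Prop :=
  Minimal (fun M : Subgroup G => M.Normal ∧ M ≠ ⊥) N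

namespace IsMinimalNormal

variable {M N : Subgroup G}

theorem normal (hN : N.IsMinimalNormal) : N.Normal := hN.prop.1

theorem ne_bot (hN : N.IsMinimalNormal) : N ≠ ⊥ := hN.prop.2

theorem eq_of_le (hN : N.IsMinimalNormal) (hM : M.Normal) (hM' : M ≠ ⊥) (hle : M ≤ N) : M = N :=
  Minimal.eq_of_le hN ⟨hM, hM'⟩ hle

theorem smul (hN : N.IsMinimalNormal) (e : MulAut G) : (e • N).IsMinimalNormal := by
  refine ⟨⟨hN.normal.smul e, by simpa [smul_eq_iff_eq_inv_smul] using hN.ne_bot⟩, ?_⟩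
  intro M ⟨hM, hM'⟩ hle
  rw [subset_pointwise_smul_iff] at hle
  have hM'' : e⁻¹ • M ≠ ⊥ := by simpa [smul_eq_iff_eq_inv_smul] using hM'
  exact (inv_smul_eq_iff.mp (hN.eq_of_le (hM.smul e⁻¹) hM'' hle)).ge

theorem disjoint_of_ne (hM : M.IsMinimalNormal) (hN : N.IsMinimalNormal) (hne : M ≠ N) :
    Disjoint M N := by
  rw [disjoint_iff]
  by_contra h
  have := hM.normal
  have := hN.normal
  have hinf : (M ⊓ N).Normal := inferInstance
  exact hne ((hM.eq_of_le hinf h inf_le_left).symm.trans (hN.eq_of_le hinf h inf_le_right))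

theorem le_centralizer_of_ne (hM : M.IsMinimalNormal) (hN : N.IsMinimalNormal) (hne : M ≠ N) :
    M ≤ centralizer N := fun x hx y hy =>
  (commute_of_normal_of_disjoint M N hM.normal hN.normal (hM.disjoint_of_ne hN hne) x y hx hy).symm

theorem isSimpleGroup (hN : N.IsMinimalNormal) (hC : N ⊔ centralizer N = ⊤) : IsSimpleGroup N := by
  have : Nontrivial N := (nontrivial_iff_ne_bot N).mpr hN.ne_bot
  refine ⟨fun H hH => ?_⟩
  have hle : H.map N.subtype ≤ N := map_subtype_le H
  have : ((H.map N.subtype).subgroupOf N).Normal := by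
    rwa [subgroupOf, comap_map_eq_self_of_injective N.subtype_injective]
  have hnormal : (H.map N.subtype).Normal := by
    rw [← normalizer_eq_top_iff, eq_top_iff, ← hC]
    exact sup_le (le_normalizer_of_normal_subgroupOf hle)
      ((centralizer_le hle).trans (centralizer_le_normalizer _))
  by_cases hbot : H.map N.subtype = ⊥
  · exact .inl ((map_eq_bot_iff_of_injective H N.subtype_injective).mp hbot)
  · refine .inr ?_
    rw [← comap_map_eq_self_of_injective N.subtype_injective H, hN.eq_of_le hnormal hbot hle,
      ← subgroupOf, subgroupOf_self]

end IsMinimalNormal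

theorem exists_isMinimalNormal [Finite G] [Nontrivial G] : ∃ N : Subgroup G, N.IsMinimalNormal :=
  exists_minimal_of_wellFoundedLT _ ⟨⊤, inferInstance, top_ne_bot⟩

section Family

variable {ι : Type*} {K : ι → Subgroup G}

theorem iSup_le_centralizer_iSup (h : ∀ i j, K i ≤ centralizer (K j)) :
    ⨆ i, K i ≤ centralizer (⨆ i, K i : Subgroup G) :=
  iSup_le fun i => le_centralizer_iff.mp (iSup_le fun j => h j i)

theorem iSup_ne_le_centralizer (hK : ∀ i, (K i).IsMinimalNormal) (hinj : Function.Injective K)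
    (i : ι) : ⨆ (j) (_ : j ≠ i), K j ≤ centralizer (K i) :=
  iSup₂_le fun j hj => (hK j).le_centralizer_of_ne (hK i) (hinj.ne hj)

theorem sup_centralizer_eq_top (hK : ∀ i, (K i).IsMinimalNormal) (hinj : Function.Injective K)
    (htop : ⨆ i, K i = ⊤) (i : ι) : K i ⊔ centralizer (K i) = ⊤ :=
  top_le_iff.mp <| htop ▸ (iSup_split_single K i).le.trans
    (sup_le_sup_left (iSup_ne_le_centralizer hK hinj i) _)

theorem inf_iSup_ne_eq_bot (hK : ∀ i, (K i).IsMinimalNormal) (hinj : Function.Injective K) (i : ι)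
    (hi : ¬ K i ≤ centralizer (K i)) :
    K i ⊓ ⨆ (j) (_ : j ≠ i), K j = ⊥ := by
  have := (hK i).normal
  have : ∀ j, (K j).Normal := fun j => (hK j).normal
  by_contra h
  refine hi ?_
  calc K i = K i ⊓ ⨆ (j) (_ : j ≠ i), K j := ((hK i).eq_of_le inferInstance h inf_le_left).symm
    _ ≤ ⨆ (j) (_ : j ≠ i), K j := inf_le_right
    _ ≤ centralizer (K i) := iSup_ne_le_centralizer hK hinj i

end Family

end Subgroup

open Subgroup

namespace IsMulASimple

variable {A G : Type*} [Group A] [Group G] {φ : A →* MulAut G}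

theorem smul_iSup_smul (N : Subgroup G) (b : A) : φ b • ⨆ a, φ a • N = ⨆ a, φ a • N := by
  simp only [Subgroup.smul_iSup, smul_smul, ← map_mul]
  exact (Equiv.mulLeft b).iSup_comp (g := fun a => φ a • N)

theorem iSup_smul_eq_top (hG : IsMulASimple φ) {N : Subgroup G} (hN : N.Normal) (hN' : N ≠ ⊥) :
    ⨆ a, φ a • N = ⊤ := by
  have : ∀ a, (φ a • N).Normal := fun a => hN.smul _
  refine (hG.2 _ inferInstance (smul_iSup_smul N)).resolve_left fun h => hN' (eq_bot_iff.mpr ?_)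
  exact h ▸ le_iSup_of_le 1 (by rw [map_one, one_smul])

theorem not_le_centralizer (hG : IsMulASimple φ) {N : Subgroup G} (hN : N.IsMinimalNormal) :
    ¬ N ≤ centralizer N := by
  intro hab
  have hcomm : ∀ a b, φ a • N ≤ centralizer (φ b • N : Subgroup G) := by
    intro a b
    by_cases h : φ a • N = φ b • N
    · exact h ▸ smul_le_centralizer_smul hab _
    · exact (hN.smul _).le_centralizer_of_ne (hN.smul _) h
  have htop := iSup_le_centralizer_iSup hcomm
  rw [hG.iSup_smul_eq_top hN.normal hN.ne_bot] at htop
  exact hG.1 fun x y => htop (mem_top y) x (mem_top x)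

end IsMulASimple

/-- If a group `A` acts by automorphisms on a finite group `G` and
`G` is `A`-simple, then `G` is the internal direct product of nonabelian simple
subgroups `K₁, …, K_n` that are permuted transitively by `A`. -/
theorem isMulASimple_internal_direct_product
    {A G : Type*} [Group A] [Group G] [Finite G] (φ : A →* MulAut G)
    (hG : IsMulASimple φ) :
    ∃ (n : ℕ) (K : Fin n → Subgroup G),
      (∀ i, IsSimpleGroup ↥(K i)) ∧
      (∀ i, ¬ ∀ x y : ↥(K i), Commute x y) ∧
      (∀ i j, i ≠ j → ∀ x ∈ K i, ∀ y ∈ K j, Commute x y) ∧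
      (⨆ i, K i) = ⊤ ∧
      (∀ i, K i ⊓ (⨆ j, ⨆ _ : j ≠ i, K j) = ⊥) ∧
      (∀ (a : A) (i : Fin n), ∃ j, φ a • K i = K j) ∧
      (∀ i j, ∃ a : A, φ a • K i = K j) := by
  have : Nontrivial G := by
    by_contra h
    exact hG.1 fun x y => (not_nontrivial_iff_subsingleton.mp h).elim _ _
  obtain ⟨K₀, hK₀⟩ := exists_isMinimalNormal (G := G)
  obtain ⟨n, K, hK⟩ := (Set.toFinite (Set.range fun a => φ a • K₀)).fin_embedding
  have hKorbit : ∀ i, ∃ a, φ a • K₀ = K i := fun i => hK.subset (Set.mem_range_self i)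
  have hKsurj : ∀ a, ∃ i, K i = φ a • K₀ := fun a => hK.symm.subset (Set.mem_range_self a)
  have hmin : ∀ i, (K i).IsMinimalNormal := fun i => by
    obtain ⟨a, ha⟩ := hKorbit i
    exact ha ▸ hK₀.smul _
  have htop : ⨆ i, K i = ⊤ := by
    rw [← sSup_range, hK, sSup_range, hG.iSup_smul_eq_top hK₀.normal hK₀.ne_bot]
  refine ⟨n, K, fun i => (hmin i).isSimpleGroup (sup_centralizer_eq_top hmin K.injective htop i),
    fun i => le_centralizer_self_iff_forall_commute.not.mp (hG.not_le_centralizer (hmin i)),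
    fun i j hij x hx y hy =>
      (hmin j).le_centralizer_of_ne (hmin i) (K.injective.ne hij.symm) hy x hx,
    htop, fun i => inf_iSup_ne_eq_bot hmin K.injective i (hG.not_le_centralizer (hmin i)),
    fun a i => ?_, fun i j => ?_⟩
  · obtain ⟨b, hb⟩ := hKorbit i
    obtain ⟨j, hj⟩ := hKsurj (a * b)
    exact ⟨j, by rw [hj, map_mul, mul_smul, hb]⟩
  · obtain ⟨b, hb⟩ := hKorbit i
    obtain ⟨c, hc⟩ := hKorbit j
    exact ⟨c * b⁻¹, by rw [← hb, ← hc, ← mul_smul, ← map_mul, inv_mul_cancel_right]⟩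
end
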